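/- arXiv:2603.22801 — 2 statements merged into one kernel-verified Lean document; each statement's English description precedes it below -/
import Mathlib

section
/- Let x₁ ~ N(0,a) and x₂ ~ N(0,b) be independent centered Gaussians, and σ the ReLU function. Then E[σ(x₁)·σ(x₁+x₂)] = a/4 + (a/(2π))·arctan(√(a/b)) + √(ab)/(2π). -/
/-!
Rescaling reduces the claim to two independent standard Gaussians, with joint density
`(2π)⁻¹ exp (-(x² + y²) / 2)`. The integrand `max (√a x) 0 * max (√a x + √b y) 0` is positively
homogeneous of degree 2, so in polar coordinates the radial factor is
`∫₀^∞ r³ exp (-r² / 2) dr = 2` and an integral over the circle remains. Writing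
`√a cos θ + √b sin θ = √(a + b) sin (θ + φ)` with `φ = arctan √(a / b) ∈ [0, π / 2]`, the integrand
on the circle vanishes outside `[-φ, π / 2]`, where `cos θ * sin (θ + φ)` integrates to
`((π / 2 + φ) sin φ + cos φ) / 2`.
-/

open MeasureTheory ProbabilityTheory Real Set
open scoped NNReal

lemma gaussianReal_zero_eq_map_sqrt_mul (v : ℝ≥0) :
    gaussianReal 0 v = (gaussianReal 0 1).map (√v * ·) := by
  rw [gaussianReal_map_const_mul, mul_zero, mul_one]
  congr
  ext
  simp

lemma integral_prod_gaussianReal_eq_integral_prod_gaussianReal_one (v w : ℝ≥0)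
    {F : ℝ × ℝ → ℝ} (hF : Measurable F) :
    ∫ p, F p ∂(gaussianReal 0 v).prod (gaussianReal 0 w)
      = ∫ p, F (√v * p.1, √w * p.2) ∂(gaussianReal 0 1).prod (gaussianReal 0 1) := by
  have hv : Measurable (√(v : ℝ) * ·) := measurable_const_mul _
  have hw : Measurable (√(w : ℝ) * ·) := measurable_const_mul _
  rw [gaussianReal_zero_eq_map_sqrt_mul v, gaussianReal_zero_eq_map_sqrt_mul w,
    Measure.map_prod_map _ _ hv hw,
    integral_map (hv.prodMap hw).aemeasurable hF.aestronglyMeasurable]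
  rfl

lemma integral_prod_gaussianReal_one_eq_integral_exp (F : ℝ × ℝ → ℝ) :
    ∫ p, F p ∂(gaussianReal 0 1).prod (gaussianReal 0 1)
      = (2 * π)⁻¹ * ∫ p : ℝ × ℝ, exp (-(p.1 ^ 2 + p.2 ^ 2) / 2) * F p := by
  rw [gaussianReal_of_var_ne_zero _ one_ne_zero,
    prod_withDensity (measurable_gaussianPDF _ _) (measurable_gaussianPDF _ _),
    integral_withDensity_eq_integral_toReal_smul (by fun_prop)
      (ae_of_all _ fun _ => ENNReal.mul_lt_top gaussianPDF_lt_top gaussianPDF_lt_top),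
    ← Measure.volume_eq_prod, ← integral_const_mul]
  congr 1 with p
  have h2π : (√(2 * π))⁻¹ * (√(2 * π))⁻¹ = (2 * π)⁻¹ := by
    rw [← mul_inv, mul_self_sqrt (by positivity)]
  simp only [ENNReal.toReal_mul, toReal_gaussianPDF, gaussianPDFReal, smul_eq_mul,
    NNReal.coe_one, mul_one, sub_zero]
  rw [neg_add, add_div, exp_add, ← h2π]
  ring

lemma integral_Ioi_pow_three_mul_exp_neg_sq_div_two :
    ∫ r in Ioi (0 : ℝ), r ^ 3 * exp (-r ^ 2 / 2) = 2 := by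
  have h := integral_rpow_mul_exp_neg_mul_rpow (p := 2) (q := 3) (b := 1 / 2)
    (by norm_num) (by norm_num) (by norm_num)
  norm_num at h
  convert h using 5
  ring

lemma integral_exp_neg_sq_div_two_mul_of_homogeneous {F : ℝ × ℝ → ℝ}
    (hF : ∀ r, 0 < r → ∀ x y, F (r * x, r * y) = r ^ 2 * F (x, y)) :
    ∫ p : ℝ × ℝ, exp (-(p.1 ^ 2 + p.2 ^ 2) / 2) * F p
      = 2 * ∫ θ in (-π)..π, F (cos θ, sin θ) := by
  have hpolar : ∀ p ∈ polarCoord.target,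
      p.1 • (exp (-((polarCoord.symm p).1 ^ 2 + (polarCoord.symm p).2 ^ 2) / 2)
        * F (polarCoord.symm p))
      = (p.1 ^ 3 * exp (-p.1 ^ 2 / 2)) * F (cos p.2, sin p.2) := by
    rintro ⟨r, θ⟩ ⟨hr, -⟩
    have hsq : (r * cos θ) ^ 2 + (r * sin θ) ^ 2 = r ^ 2 := by
      linear_combination r ^ 2 * sin_sq_add_cos_sq θ
    rw [polarCoord_symm_apply, hsq, hF r hr, smul_eq_mul]
    ring
  rw [← integral_comp_polarCoord_symm,
    setIntegral_congr_fun polarCoord.open_target.measurableSet hpolar, polarCoord_target,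
    Measure.volume_eq_prod,
    setIntegral_prod_mul (fun r => r ^ 3 * exp (-r ^ 2 / 2)) (fun θ => F (cos θ, sin θ)),
    integral_Ioi_pow_three_mul_exp_neg_sq_div_two,
    intervalIntegral.integral_of_le (by linarith [pi_pos]), integral_Ioc_eq_integral_Ioo]

lemma hasDerivAt_primitive_cos_mul_sin_add (φ θ : ℝ) :
    HasDerivAt (fun t => (t * sin φ - cos t * cos (t + φ)) / 2) (cos θ * sin (θ + φ)) θ := by
  have hshift : HasDerivAt (fun t => t + φ) 1 θ := (hasDerivAt_id θ).add_const φ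
  have h := (((hasDerivAt_id θ).mul_const (sin φ)).sub
    ((hasDerivAt_cos θ).mul ((hasDerivAt_cos (θ + φ)).comp θ hshift))).div_const 2
  have hφ : sin φ = sin (θ + φ) * cos θ - cos (θ + φ) * sin θ := by
    rw [← sin_sub, add_sub_cancel_left]
  exact h.congr_deriv (by simp only [Function.comp, hφ]; ring)

lemma integral_max_cos_mul_max_sin_add {φ : ℝ} (hφ₀ : 0 ≤ φ) (hφ : φ ≤ π / 2) :
    ∫ θ in (-π)..π, max (cos θ) 0 * max (sin (θ + φ)) 0
      = ((π / 2 + φ) * sin φ + cos φ) / 2 := by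
  have hπ := pi_pos
  have hint : ∀ u v, IntervalIntegrable
      (fun θ => max (cos θ) 0 * max (sin (θ + φ)) 0) volume u v :=
    fun u v => by apply Continuous.intervalIntegrable; fun_prop
  have hleft : ∫ θ in (-π)..(-φ), max (cos θ) 0 * max (sin (θ + φ)) 0 = 0 := by
    refine intervalIntegral.integral_congr (g := 0) (fun θ hθ => ?_) |>.trans (by simp)
    rw [uIcc_of_le (by linarith)] at hθ
    have : sin (θ + φ) ≤ 0 :=
      sin_nonpos_of_nonpos_of_neg_pi_le (by linarith [hθ.2]) (by linarith [hθ.1])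
    simp [max_eq_right this]
  have hright : ∫ θ in (π / 2)..π, max (cos θ) 0 * max (sin (θ + φ)) 0 = 0 := by
    refine intervalIntegral.integral_congr (g := 0) (fun θ hθ => ?_) |>.trans (by simp)
    rw [uIcc_of_le (by linarith)] at hθ
    have : cos θ ≤ 0 := cos_nonpos_of_pi_div_two_le_of_le hθ.1 (by linarith [hθ.2])
    simp [max_eq_right this]
  have hmid : ∫ θ in (-φ)..(π / 2), max (cos θ) 0 * max (sin (θ + φ)) 0
      = ((π / 2 + φ) * sin φ + cos φ) / 2 := by
    rw [intervalIntegral.integral_congr (g := fun θ => cos θ * sin (θ + φ)) (fun θ hθ => ?_),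
      intervalIntegral.integral_eq_sub_of_hasDerivAt
        (fun θ _ => hasDerivAt_primitive_cos_mul_sin_add φ θ)
        (by apply Continuous.intervalIntegrable; fun_prop)]
    · simp only [cos_pi_div_two, neg_add_cancel, cos_neg, cos_zero]
      ring
    rw [uIcc_of_le (by linarith)] at hθ
    have hcos : 0 ≤ cos θ := cos_nonneg_of_mem_Icc ⟨by linarith [hθ.1], hθ.2⟩
    have hsin : 0 ≤ sin (θ + φ) :=
      sin_nonneg_of_nonneg_of_le_pi (by linarith [hθ.1]) (by linarith [hθ.2])
    simp [max_eq_left hcos, max_eq_left hsin]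
  rw [← intervalIntegral.integral_add_adjacent_intervals (hint (-π) (-φ)) (hint _ π),
    ← intervalIntegral.integral_add_adjacent_intervals (hint (-φ) (π / 2)) (hint _ π),
    hleft, hmid, hright]
  ring

lemma sqrt_one_add_sq_sqrt_div {a b : ℝ} (ha : 0 ≤ a) (hb : 0 < b) :
    √(1 + √(a / b) ^ 2) = √(a + b) / √b := by
  rw [sq_sqrt (div_nonneg ha hb.le), ← sqrt_div' _ hb.le]
  congr 1
  field_simp
  ring

lemma sqrt_add_mul_sin_arctan_sqrt_div {a b : ℝ} (ha : 0 ≤ a) (hb : 0 < b) :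
    √(a + b) * sin (arctan √(a / b)) = √a := by
  have : 0 < √(a + b) := sqrt_pos.2 (by linarith)
  have : 0 < √b := sqrt_pos.2 hb
  rw [sin_arctan, sqrt_one_add_sq_sqrt_div ha hb, sqrt_div ha]
  field_simp

lemma sqrt_add_mul_cos_arctan_sqrt_div {a b : ℝ} (ha : 0 ≤ a) (hb : 0 < b) :
    √(a + b) * cos (arctan √(a / b)) = √b := by
  have : 0 < √(a + b) := sqrt_pos.2 (by linarith)
  have : 0 < √b := sqrt_pos.2 hb
  rw [cos_arctan, sqrt_one_add_sq_sqrt_div ha hb]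
  field_simp

lemma max_mul_zero_of_nonneg {c : ℝ} (hc : 0 ≤ c) (x : ℝ) : max (c * x) 0 = c * max x 0 := by
  rw [mul_max_of_nonneg _ _ hc, mul_zero]

theorem gaussian_relu_product_moment_general (a b : ℝ≥0) (hb : 0 < b) :
    ∫ p : ℝ × ℝ,
        max p.1 0 * max (p.1 + p.2) 0
        ∂((gaussianReal 0 a).prod (gaussianReal 0 b))
      = (a : ℝ) / 4 +
          ((a : ℝ) / (2 * Real.pi)) * Real.arctan (Real.sqrt ((a : ℝ) / (b : ℝ))) +
          Real.sqrt ((a : ℝ) * (b : ℝ)) / (2 * Real.pi) := by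
  have hb' : (0 : ℝ) < b := hb
  set φ := arctan √((a : ℝ) / b)
  have hsin : √(a + b : ℝ) * sin φ = √a := sqrt_add_mul_sin_arctan_sqrt_div a.coe_nonneg hb'
  have hcos : √(a + b : ℝ) * cos φ = √b := sqrt_add_mul_cos_arctan_sqrt_div a.coe_nonneg hb'
  have hhom : ∀ r, 0 < r → ∀ x y, max (√a * (r * x)) 0 * max (√a * (r * x) + √b * (r * y)) 0
      = r ^ 2 * (max (√a * x) 0 * max (√a * x + √b * y) 0) := by
    intro r hr x y
    rw [show √a * (r * x) + √b * (r * y) = r * (√a * x + √b * y) by ring,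
      show √a * (r * x) = r * (√a * x) by ring, max_mul_zero_of_nonneg hr.le,
      max_mul_zero_of_nonneg hr.le]
    ring
  have hcircle : ∀ θ, max (√a * cos θ) 0 * max (√a * cos θ + √b * sin θ) 0
      = √a * √(a + b) * (max (cos θ) 0 * max (sin (θ + φ)) 0) := by
    intro θ
    rw [show √a * cos θ + √b * sin θ = √(a + b) * sin (θ + φ) by
        rw [sin_add, ← hsin, ← hcos]; ring,
      max_mul_zero_of_nonneg (sqrt_nonneg _), max_mul_zero_of_nonneg (sqrt_nonneg _)]
    ring
  rw [integral_prod_gaussianReal_eq_integral_prod_gaussianReal_one a b (by fun_prop),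
    integral_prod_gaussianReal_one_eq_integral_exp,
    integral_exp_neg_sq_div_two_mul_of_homogeneous
      (F := fun p => max (√a * p.1) 0 * max (√a * p.1 + √b * p.2) 0) hhom]
  simp_rw [hcircle]
  rw [intervalIntegral.integral_const_mul, integral_max_cos_mul_max_sin_add
    (arctan_nonneg.2 (sqrt_nonneg _)) (arctan_lt_pi_div_two _).le]
  calc _ = √a / (2 * π) * ((π / 2 + φ) * (√(a + b) * sin φ) + √(a + b) * cos φ) := by ring
    _ = √a / (2 * π) * ((π / 2 + φ) * √a + √b) := by rw [hsin, hcos]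
    _ = _ := by
      rw [sqrt_mul a.coe_nonneg]
      field_simp
      linear_combination (4 * π + 8 * φ) * mul_self_sqrt a.coe_nonneg

theorem gaussian_relu_product_moment (a b : ℝ≥0) (ha : 0 < a) (hb : 0 < b) :
    ∫ p : ℝ × ℝ,
        max p.1 0 * max (p.1 + p.2) 0
        ∂((gaussianReal 0 a).prod (gaussianReal 0 b))
      = (a : ℝ) / 4 +
          ((a : ℝ) / (2 * Real.pi)) * Real.arctan (Real.sqrt ((a : ℝ) / (b : ℝ))) +
          Real.sqrt ((a : ℝ) * (b : ℝ)) / (2 * Real.pi) :=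
  gaussian_relu_product_moment_general a b hb
end

section
/- Let x₁ ~ N(0,a) and x₂ ~ N(0,b) be independent centered Gaussians and σ the Leaky ReLU with slope κ ∈ [0,1). Then E[x₂·σ(x₁)·σ'(x₁+x₂)] = (1−κ)²·b·√(ab)/(2π(a+b)). -/
/-!
Integrate out `x₂` first. Since `φ_v' (y) = -(y / v) φ_v (y)`, the truncated first moment of
`N(0, v)` is `E[y 1_{y ≥ t}] = v φ_v(t)`; as `σ'(x + y) = κ + (1 - κ) 1_{y ≥ -x}`, this gives
`E[x₂ σ'(x₁ + x₂) | x₁] = (1 - κ) b φ_b(x₁)`. The product of densities is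
`φ_a φ_b = φ_{a+b}(0) φ_s` with `s = ab / (a + b)`, so the remaining expectation
`E_a[σ φ_b]` is `φ_{a+b}(0) E_s[σ] = φ_{a+b}(0) (1 - κ) s φ_s(0)`, again by the truncated moment.
-/

open MeasureTheory ProbabilityTheory Real Set Filter Topology
open scoped NNReal

noncomputable def leakyReLU (κ x : ℝ) : ℝ := if 0 ≤ x then x else κ * x

noncomputable def leakyReLUDeriv (κ x : ℝ) : ℝ := if 0 ≤ x then 1 else κ

section LeakyReLU

variable (κ : ℝ)

lemma leakyReLU_eq_mul_leakyReLUDeriv (x : ℝ) : leakyReLU κ x = x * leakyReLUDeriv κ x := by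
  unfold leakyReLU leakyReLUDeriv
  split_ifs <;> ring

lemma leakyReLU_eq_add_indicator (x : ℝ) :
    leakyReLU κ x = κ * x + (1 - κ) * (Ici 0).indicator (fun y => y) x := by
  by_cases hx : 0 ≤ x
  · rw [leakyReLU, if_pos hx, indicator_of_mem (mem_Ici.2 hx)]
    ring
  · rw [leakyReLU, if_neg hx, indicator_of_notMem (mt mem_Ici.1 hx)]
    ring

lemma mul_leakyReLUDeriv_add (x y : ℝ) :
    y * leakyReLUDeriv κ (x + y) = κ * y + (1 - κ) * (Ici (-x)).indicator (fun y => y) y := by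
  by_cases h : 0 ≤ x + y
  · rw [leakyReLUDeriv, if_pos h, indicator_of_mem (mem_Ici.2 (by linarith))]
    ring
  · rw [leakyReLUDeriv, if_neg h, indicator_of_notMem fun hy => h (by linarith [mem_Ici.1 hy])]
    ring

lemma abs_leakyReLUDeriv_le (x : ℝ) : |leakyReLUDeriv κ x| ≤ max 1 |κ| := by
  unfold leakyReLUDeriv
  split_ifs <;> simp

lemma measurable_leakyReLUDeriv : Measurable (leakyReLUDeriv κ) :=
  Measurable.ite (measurableSet_le measurable_const measurable_id) measurable_const measurable_const

end LeakyReLU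

lemma integrable_mul_leakyReLU_mul_leakyReLUDeriv {μ ν : Measure ℝ}
    (hμ : Integrable (fun x => x) μ) (hν : Integrable (fun y => y) ν) (κ : ℝ) :
    Integrable (fun p : ℝ × ℝ => p.2 * leakyReLU κ p.1 * leakyReLUDeriv κ (p.1 + p.2))
      (μ.prod ν) := by
  have hmeas : Measurable fun p : ℝ × ℝ => leakyReLUDeriv κ p.1 * leakyReLUDeriv κ (p.1 + p.2) :=
    ((measurable_leakyReLUDeriv κ).comp measurable_fst).mul
      ((measurable_leakyReLUDeriv κ).comp (measurable_fst.add measurable_snd))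
  have hbound (p : ℝ × ℝ) :
      ‖leakyReLUDeriv κ p.1 * leakyReLUDeriv κ (p.1 + p.2)‖ ≤ max 1 |κ| * max 1 |κ| := by
    rw [norm_mul]
    exact mul_le_mul (abs_leakyReLUDeriv_le κ _) (abs_leakyReLUDeriv_le κ _) (norm_nonneg _)
      (by positivity)
  refine ((hμ.mul_prod hν).mul_bdd hmeas.aestronglyMeasurable (ae_of_all _ hbound)).congr
    (ae_of_all _ fun p => ?_)
  simp only [leakyReLU_eq_mul_leakyReLUDeriv]
  ring

namespace ProbabilityTheory

variable {μ : ℝ} {v : ℝ≥0}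

lemma hasDerivAt_gaussianPDFReal (x : ℝ) :
    HasDerivAt (gaussianPDFReal μ v) (-((x - μ) / v) * gaussianPDFReal μ v x) x := by
  have hexponent : HasDerivAt (fun y => -(y - μ) ^ 2 / (2 * v)) (-((x - μ) / v)) x :=
    ((((hasDerivAt_id' x).sub_const μ).fun_pow 2).fun_neg.div_const (2 * (v : ℝ))).congr_deriv
      (by push_cast; ring)
  exact (hexponent.exp.const_mul _).congr_deriv (by rw [gaussianPDFReal]; ring)

lemma tendsto_gaussianPDFReal_atTop : Tendsto (gaussianPDFReal μ v) atTop (𝓝 0) := by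
  rcases eq_or_ne v 0 with rfl | hv
  · rw [gaussianPDFReal_zero_var]
    exact tendsto_const_nhds
  have hv' : (0 : ℝ) < 2 * v := by positivity
  have h : Tendsto (fun x : ℝ => -(x - μ) ^ 2 / (2 * v)) atTop atBot := by
    simp_rw [neg_div]
    exact tendsto_neg_atTop_atBot.comp (((tendsto_pow_atTop two_ne_zero).comp
      (tendsto_atTop_add_const_right _ (-μ) tendsto_id)).atTop_div_const hv')
  have h' := (tendsto_exp_atBot.comp h).const_mul (√(2 * π * v))⁻¹
  rw [mul_zero] at h'
  exact h'

lemma gaussianPDFReal_neg (x : ℝ) : gaussianPDFReal μ v (-x) = gaussianPDFReal (-μ) v x := by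
  simp only [gaussianPDFReal]
  ring_nf

lemma integrable_gaussianReal_iff {E : Type*} [NormedAddCommGroup E] [NormedSpace ℝ E]
    (hv : v ≠ 0) {f : ℝ → E} :
    Integrable f (gaussianReal μ v) ↔ Integrable (fun x => gaussianPDFReal μ v x • f x) := by
  rw [gaussianReal_of_var_ne_zero _ hv, integrable_withDensity_iff_integrable_smul'
    (measurable_gaussianPDF _ _) (ae_of_all _ fun _ => gaussianPDF_lt_top)]
  simp_rw [toReal_gaussianPDF]

lemma integrable_id_gaussianReal : Integrable (fun x => x) (gaussianReal μ v) :=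
  (memLp_id_gaussianReal 1).integrable le_rfl

lemma integrable_gaussianPDFReal_mul_id (hv : v ≠ 0) :
    Integrable (fun x => gaussianPDFReal μ v x * x) :=
  (integrable_gaussianReal_iff hv).1 integrable_id_gaussianReal

lemma integral_Ioi_gaussianPDFReal_mul_id (hv : v ≠ 0) (t : ℝ) :
    ∫ x in Ioi t, gaussianPDFReal 0 v x * x = v * gaussianPDFReal 0 v t := by
  have hderiv (x : ℝ) (_ : x ∈ Ici t) :
      HasDerivAt (fun y => -(v * gaussianPDFReal 0 v y)) (gaussianPDFReal 0 v x * x) x := by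
    refine ((hasDerivAt_gaussianPDFReal x).const_mul (v : ℝ)).neg.congr_deriv ?_
    field_simp [NNReal.coe_ne_zero.2 hv]
    ring
  have hlim : Tendsto (fun y => -(v * gaussianPDFReal 0 v y)) atTop (𝓝 0) := by
    simpa using (tendsto_gaussianPDFReal_atTop.const_mul (v : ℝ)).neg
  rw [integral_Ioi_of_hasDerivAt_of_tendsto' hderiv
    (integrable_gaussianPDFReal_mul_id hv).integrableOn hlim]
  ring

lemma integral_indicator_Ici_id_gaussianReal (hv : v ≠ 0) (t : ℝ) :
    ∫ x, (Ici t).indicator (fun x => x) x ∂gaussianReal 0 v = v * gaussianPDFReal 0 v t := by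
  simp_rw [integral_gaussianReal_eq_integral_smul hv, smul_eq_mul, ← indicator_mul_right]
  rw [integral_indicator measurableSet_Ici, integral_Ici_eq_integral_Ioi]
  exact integral_Ioi_gaussianPDFReal_mul_id hv t

lemma gaussianPDFReal_mul_gaussianPDFReal {a b : ℝ≥0} (ha : a ≠ 0) (hb : b ≠ 0) (x : ℝ) :
    gaussianPDFReal 0 a x * gaussianPDFReal 0 b x =
      gaussianPDFReal 0 (a + b) 0 * gaussianPDFReal 0 (a * b / (a + b)) x := by
  have ha' : (0 : ℝ) < a := by positivity
  have hb' : (0 : ℝ) < b := by positivity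
  have hsqrt :
      √(2 * π * a) * √(2 * π * b) = √(2 * π * (a + b)) * √(2 * π * (a * b / (a + b))) := by
    rw [← sqrt_mul (by positivity), ← sqrt_mul (by positivity)]
    field_simp
  have hexponent : -x ^ 2 / (2 * a) + -x ^ 2 / (2 * b) =
      -0 ^ 2 / (2 * (a + b)) + -x ^ 2 / (2 * (a * b / (a + b))) := by
    field_simp
    ring
  simp only [gaussianPDFReal, sub_zero, NNReal.coe_add, NNReal.coe_mul, NNReal.coe_div]
  rw [mul_mul_mul_comm, ← mul_inv, ← exp_add, hsqrt, hexponent, mul_inv, exp_add]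
  ring

lemma gaussianPDFReal_add_zero_mul_mul_gaussianPDFReal_zero {a b : ℝ≥0} (ha : a ≠ 0)
    (hb : b ≠ 0) :
    gaussianPDFReal 0 (a + b) 0 *
        ((a * b / (a + b) : ℝ≥0) * gaussianPDFReal 0 (a * b / (a + b)) 0) =
      √(a * b) / (2 * π * (a + b)) := by
  have ha' : (0 : ℝ) < a := by positivity
  have hb' : (0 : ℝ) < b := by positivity
  have hsqrt : √(2 * π * (a + b)) * √(2 * π * (a * b / (a + b))) = 2 * π * √(a * b) := by
    rw [← sqrt_mul (by positivity), show 2 * π * (a + b) * (2 * π * (a * b / (a + b))) =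
      (2 * π) ^ 2 * (a * b) by field_simp, sqrt_mul (by positivity), sqrt_sq (by positivity)]
  simp only [gaussianPDFReal, sub_zero, NNReal.coe_add, NNReal.coe_mul, NNReal.coe_div, ne_eq,
    OfNat.ofNat_ne_zero, not_false_eq_true, zero_pow, neg_zero, zero_div, exp_zero, mul_one]
  rw [mul_left_comm, ← mul_inv, hsqrt]
  field_simp
  exact (sq_sqrt (by positivity)).symm

lemma integral_mul_gaussianPDFReal_gaussianReal {a b : ℝ≥0} (ha : a ≠ 0) (hb : b ≠ 0)
    (g : ℝ → ℝ) :
    ∫ x, g x * gaussianPDFReal 0 b x ∂gaussianReal 0 a =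
      gaussianPDFReal 0 (a + b) 0 * ∫ x, g x ∂gaussianReal 0 (a * b / (a + b)) := by
  have hs : a * b / (a + b) ≠ 0 := by positivity
  simp_rw [integral_gaussianReal_eq_integral_smul ha, integral_gaussianReal_eq_integral_smul hs,
    smul_eq_mul, ← integral_const_mul]
  congr 1 with x
  linear_combination g x * gaussianPDFReal_mul_gaussianPDFReal ha hb x

end ProbabilityTheory

section LeakyReLUGaussian

variable {v : ℝ≥0}

lemma integral_mul_leakyReLUDeriv_add_gaussianReal (hv : v ≠ 0) (κ x : ℝ) :
    ∫ y, y * leakyReLUDeriv κ (x + y) ∂gaussianReal 0 v = (1 - κ) * v * gaussianPDFReal 0 v x := by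
  simp_rw [mul_leakyReLUDeriv_add]
  rw [integral_add (integrable_id_gaussianReal.const_mul κ)
      ((integrable_id_gaussianReal.indicator measurableSet_Ici).const_mul _),
    integral_const_mul, integral_const_mul, integral_id_gaussianReal,
    integral_indicator_Ici_id_gaussianReal hv, gaussianPDFReal_neg, neg_zero]
  ring

lemma integral_leakyReLU_gaussianReal (hv : v ≠ 0) (κ : ℝ) :
    ∫ x, leakyReLU κ x ∂gaussianReal 0 v = (1 - κ) * v * gaussianPDFReal 0 v 0 := by
  simp_rw [leakyReLU_eq_add_indicator]
  rw [integral_add (integrable_id_gaussianReal.const_mul κ)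
      ((integrable_id_gaussianReal.indicator measurableSet_Ici).const_mul _),
    integral_const_mul, integral_const_mul, integral_id_gaussianReal,
    integral_indicator_Ici_id_gaussianReal hv]
  ring

end LeakyReLUGaussian

theorem gaussian_leaky_cross_moment_general (a b : ℝ≥0) (ha : 0 < a) (hb : 0 < b)
    (κ : ℝ) :
    ∫ p : ℝ × ℝ,
        p.2 * (if 0 ≤ p.1 then p.1 else κ * p.1) *
          (if 0 ≤ p.1 + p.2 then (1:ℝ) else κ)
        ∂((gaussianReal 0 a).prod (gaussianReal 0 b))
      = (1 - κ) ^ 2 * (b : ℝ) * Real.sqrt ((a : ℝ) * (b : ℝ)) /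
          (2 * Real.pi * ((a : ℝ) + (b : ℝ))) := by
  change ∫ p : ℝ × ℝ, p.2 * leakyReLU κ p.1 * leakyReLUDeriv κ (p.1 + p.2)
    ∂((gaussianReal 0 a).prod (gaussianReal 0 b)) = _
  have hint := integrable_mul_leakyReLU_mul_leakyReLUDeriv
    (integrable_id_gaussianReal (μ := 0) (v := a)) (integrable_id_gaussianReal (μ := 0) (v := b)) κ
  have hinner (x : ℝ) : ∫ y, y * leakyReLU κ x * leakyReLUDeriv κ (x + y) ∂gaussianReal 0 b =
      (1 - κ) * b * (leakyReLU κ x * gaussianPDFReal 0 b x) := by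
    simp_rw [mul_right_comm _ (leakyReLU κ x), integral_mul_const,
      integral_mul_leakyReLUDeriv_add_gaussianReal hb.ne']
    ring
  rw [integral_prod _ hint]
  calc ∫ x, ∫ y, y * leakyReLU κ x * leakyReLUDeriv κ (x + y) ∂gaussianReal 0 b ∂gaussianReal 0 a
      = (1 - κ) * b * ∫ x, leakyReLU κ x * gaussianPDFReal 0 b x ∂gaussianReal 0 a := by
        simp_rw [hinner, integral_const_mul]
    _ = (1 - κ) ^ 2 * b * (gaussianPDFReal 0 (a + b) 0 * ((a * b / (a + b) : ℝ≥0) *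
          gaussianPDFReal 0 (a * b / (a + b)) 0)) := by
        rw [integral_mul_gaussianPDFReal_gaussianReal ha.ne' hb.ne',
          integral_leakyReLU_gaussianReal (by positivity)]
        ring
    _ = _ := by
        rw [gaussianPDFReal_add_zero_mul_mul_gaussianPDFReal_zero ha.ne' hb.ne']
        ring

theorem gaussian_leaky_cross_moment (a b : ℝ≥0) (ha : 0 < a) (hb : 0 < b)
    (κ : ℝ) (hκ0 : 0 ≤ κ) (hκ1 : κ < 1) :
    ∫ p : ℝ × ℝ,
        p.2 * (if 0 ≤ p.1 then p.1 else κ * p.1) *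
          (if 0 ≤ p.1 + p.2 then (1:ℝ) else κ)
        ∂((gaussianReal 0 a).prod (gaussianReal 0 b))
      = (1 - κ) ^ 2 * (b : ℝ) * Real.sqrt ((a : ℝ) * (b : ℝ)) /
          (2 * Real.pi * ((a : ℝ) + (b : ℝ))) :=
  gaussian_leaky_cross_moment_general a b ha hb κ
end
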